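/- arXiv:1402.2628 — 5 statements merged into one kernel-verified Lean document; each statement's English description precedes it below -/
import Mathlib

section
/- Let H ∈ (0,1), γ ∈ (0,1), and d ∈ (0, H/(1−H)). Define σ_d²(s,t) = (t^{2H} + γ² s^{2H} − γ(t^{2H} + s^{2H} − (t−s)^{2H})) / (1 + d(t − γs))² on the triangle A = {(s,t) : 0 ≤ s ≤ t ≤ 1}. Then σ_d² attains its maximum over A at the unique point (0,1); that is, σ_d²(0,1) = 1/(1+d)² and σ_d²(s,t) < 1/(1+d)² for every (s,t) ∈ A with (s,t) ≠ (0,1). -/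
open Set Real

noncomputable section

/-! With `a = 2H` and `u = t - γ s ∈ [0, 1]`, the numerator is `Var (B t - γ B s) ≤ u ^ a`,
strictly when `s > 0`: for `a ≤ 1` by concavity of `x ↦ x ^ a` at `t` and `t - s`; for
`1 ≤ a < 2` because `t ↦ u ^ a - (1 - γ) t ^ a - γ (t - s) ^ a` is nondecreasing (concavity of
`x ↦ x ^ (a - 1)`) and already exceeds `-γ (1 - γ) s ^ a` at `t = s`, as `a < 2`. The bound
`u ^ H (1 + d) ≤ 1 + d u`, strict for `u < 1`, is Bernoulli's inequality combined with
`d (1 - H) ≤ H`. At `s = 0` the first inequality is an equality, but then `u = t < 1`. -/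

/-- `Var (B t - γ B s)` for a fractional Brownian motion `B` with `a = 2H`. -/
def fbmVariance (a γ s t : ℝ) : ℝ :=
  t ^ a + γ ^ 2 * s ^ a - γ * (t ^ a + s ^ a - (t - s) ^ a)

lemma fbmVariance_eq (a γ s t : ℝ) :
    fbmVariance a γ s t = (1 - γ) * t ^ a + γ * (t - s) ^ a - γ * (1 - γ) * s ^ a := by
  unfold fbmVariance; ring

lemma fbmVariance_zero_left {a : ℝ} (ha : a ≠ 0) (γ t : ℝ) : fbmVariance a γ 0 t = t ^ a := by
  simp [fbmVariance, zero_rpow ha]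

lemma mul_rpow_add_mul_rpow_le {b w x y : ℝ} (hb0 : 0 ≤ b) (hb1 : b ≤ 1) (hw0 : 0 ≤ w)
    (hw1 : w ≤ 1) (hx : 0 ≤ x) (hy : 0 ≤ y) :
    (1 - w) * x ^ b + w * y ^ b ≤ ((1 - w) * x + w * y) ^ b :=
  (concaveOn_rpow hb0 hb1).2 hx hy (sub_nonneg.2 hw1) hw0 (sub_add_cancel 1 w)

lemma fbmVariance_lt_of_le_one {a γ s t : ℝ} (ha0 : 0 ≤ a) (ha1 : a ≤ 1) (hγ0 : 0 < γ)
    (hγ1 : γ < 1) (hs : 0 < s) (hst : s ≤ t) : fbmVariance a γ s t < (t - γ * s) ^ a := by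
  have hconc := mul_rpow_add_mul_rpow_le ha0 ha1 hγ0.le hγ1.le (hs.le.trans hst)
    (sub_nonneg.2 hst)
  rw [show (1 - γ) * t + γ * (t - s) = t - γ * s by ring] at hconc
  have : 0 < γ * (1 - γ) * s ^ a := by have := rpow_pos_of_pos hs a; positivity
  rw [fbmVariance_eq]
  linarith

lemma fbmVariance_lt_of_one_le {a γ s t : ℝ} (ha1 : 1 ≤ a) (ha2 : a < 2) (hγ0 : 0 < γ)
    (hγ1 : γ < 1) (hs : 0 < s) (hst : s ≤ t) : fbmVariance a γ s t < (t - γ * s) ^ a := by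
  set G : ℝ → ℝ := fun x ↦ (x - γ * s) ^ a - (1 - γ) * x ^ a - γ * (x - s) ^ a
  set G' : ℝ → ℝ := fun x ↦
    a * ((x - γ * s) ^ (a - 1) - (1 - γ) * x ^ (a - 1) - γ * (x - s) ^ (a - 1))
  have hderiv (x : ℝ) : HasDerivAt G (G' x) x := by
    have h1 := ((hasDerivAt_id' x).sub_const (γ * s)).rpow_const (p := a) (Or.inr ha1)
    have h2 := (hasDerivAt_id' x).rpow_const (p := a) (Or.inr ha1)
    have h3 := ((hasDerivAt_id' x).sub_const s).rpow_const (p := a) (Or.inr ha1)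
    exact ((h1.sub (h2.const_mul (1 - γ))).sub (h3.const_mul γ)).congr_deriv (by ring)
  have hmono : MonotoneOn G (Icc s t) := by
    refine monotoneOn_of_hasDerivWithinAt_nonneg (convex_Icc s t)
      (fun x _ ↦ (hderiv x).continuousAt.continuousWithinAt)
      (fun x _ ↦ (hderiv x).hasDerivWithinAt) fun x hx ↦ ?_
    rw [interior_Icc] at hx
    have hconc := mul_rpow_add_mul_rpow_le (sub_nonneg.2 ha1) (by linarith) hγ0.le hγ1.le
      (hs.trans hx.1).le (sub_nonneg.2 hx.1.le)
    rw [show (1 - γ) * x + γ * (x - s) = x - γ * s by ring] at hconc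
    exact mul_nonneg (by linarith) (by linarith)
  have hGs : G s = ((1 - γ) ^ a - (1 - γ)) * s ^ a := by
    simp only [G, sub_self, zero_rpow (by linarith : a ≠ 0),
      show s - γ * s = (1 - γ) * s by ring, mul_rpow (sub_nonneg.2 hγ1.le) hs.le]
    ring
  have hGt : G s ≤ G t := hmono (left_mem_Icc.2 hst) (right_mem_Icc.2 hst) hst
  have hpow : (1 - γ) ^ (2 : ℝ) < (1 - γ) ^ a :=
    rpow_lt_rpow_of_exponent_gt (by linarith) (by linarith) ha2
  rw [rpow_two] at hpow
  have := rpow_pos_of_pos hs a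
  rw [fbmVariance_eq]
  simp only [G] at hGt
  nlinarith

lemma fbmVariance_lt {a γ s t : ℝ} (ha0 : 0 ≤ a) (ha2 : a < 2) (hγ0 : 0 < γ) (hγ1 : γ < 1)
    (hs : 0 < s) (hst : s ≤ t) : fbmVariance a γ s t < (t - γ * s) ^ a := by
  rcases le_total a 1 with ha1 | ha1
  · exact fbmVariance_lt_of_le_one ha0 ha1 hγ0 hγ1 hs hst
  · exact fbmVariance_lt_of_one_le ha1 ha2 hγ0 hγ1 hs hst

lemma rpow_two_mul_div_sq_lt {H d u : ℝ} (hH0 : 0 < H) (hH1 : H < 1) (hd0 : 0 < 1 + d)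
    (hd : d * (1 - H) ≤ H) (hu0 : 0 ≤ u) (hu1 : u < 1) :
    u ^ (2 * H) / (1 + d * u) ^ 2 < 1 / (1 + d) ^ 2 := by
  have hbernoulli : u ^ H < 1 + H * (u - 1) := by
    simpa using rpow_one_add_lt_one_add_mul_self (s := u - 1) (by linarith) (by linarith) hH0 hH1
  have hlt : u ^ H * (1 + d) < 1 + d * u := by nlinarith
  have hsq := pow_lt_pow_left₀ hlt (by positivity) two_ne_zero
  rw [div_lt_div_iff₀ (by nlinarith) (by positivity), mul_comm 2 H, rpow_mul hu0, rpow_two]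
  linarith [mul_pow (u ^ H) (1 + d) 2]

lemma rpow_two_mul_div_sq_le {H d u : ℝ} (hH0 : 0 < H) (hH1 : H < 1) (hd0 : 0 < 1 + d)
    (hd : d * (1 - H) ≤ H) (hu0 : 0 ≤ u) (hu1 : u ≤ 1) :
    u ^ (2 * H) / (1 + d * u) ^ 2 ≤ 1 / (1 + d) ^ 2 := by
  rcases hu1.lt_or_eq with hu1 | rfl
  · exact (rpow_two_mul_div_sq_lt hH0 hH1 hd0 hd hu0 hu1).le
  · simp

/-- The variance function of the scaled field attains its maximum over the triangle
`A = {(s,t) : 0 ≤ s ≤ t ≤ 1}` at the unique point `(0,1)`. -/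
theorem variance_max_at_zero_one (H γ d : ℝ) (hH : H ∈ Ioo (0 : ℝ) 1)
    (hγ : γ ∈ Ioo (0 : ℝ) 1) (hd : d ∈ Ioo (0 : ℝ) (H / (1 - H))) :
    ((1 : ℝ) ^ (2 * H) + γ ^ 2 * (0 : ℝ) ^ (2 * H) -
        γ * ((1 : ℝ) ^ (2 * H) + (0 : ℝ) ^ (2 * H) - ((1 : ℝ) - 0) ^ (2 * H))) /
      (1 + d * (1 - γ * 0)) ^ 2 = 1 / (1 + d) ^ 2 ∧
    ∀ s t : ℝ, 0 ≤ s → s ≤ t → t ≤ 1 → (s, t) ≠ ((0 : ℝ), (1 : ℝ)) →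
      (t ^ (2 * H) + γ ^ 2 * s ^ (2 * H) -
          γ * (t ^ (2 * H) + s ^ (2 * H) - (t - s) ^ (2 * H))) /
        (1 + d * (t - γ * s)) ^ 2 < 1 / (1 + d) ^ 2 := by
  obtain ⟨hH0, hH1⟩ := hH
  obtain ⟨hγ0, hγ1⟩ := hγ
  obtain ⟨hd0, hdH⟩ := hd
  have h2H : 2 * H ≠ 0 := by positivity
  have hd1 : 0 < 1 + d := by linarith
  have hd2 : d * (1 - H) ≤ H := ((lt_div_iff₀ (by linarith)).1 hdH).le
  refine ⟨by simp [zero_rpow h2H], fun s t hs hst ht hne ↦ ?_⟩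
  change fbmVariance (2 * H) γ s t / _ < _
  have hu0 : 0 ≤ t - γ * s := by nlinarith
  have hu1 : t - γ * s ≤ 1 := by nlinarith
  rcases hs.eq_or_lt with rfl | hs0
  · have ht1 : t < 1 := ht.lt_of_ne fun h ↦ hne (by rw [h])
    simpa [fbmVariance_zero_left h2H] using rpow_two_mul_div_sq_lt hH0 hH1 hd1 hd2 hst ht1
  · calc fbmVariance (2 * H) γ s t / (1 + d * (t - γ * s)) ^ 2
        < (t - γ * s) ^ (2 * H) / (1 + d * (t - γ * s)) ^ 2 :=
          div_lt_div_of_pos_right (fbmVariance_lt (by positivity) (by linarith) hγ0 hγ1 hs0 hst)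
            (pow_pos (add_pos_of_pos_of_nonneg one_pos (mul_nonneg hd0.le hu0)) 2)
      _ ≤ 1 / (1 + d) ^ 2 := rpow_two_mul_div_sq_le hH0 hH1 hd1 hd2 hu0 hu1
end
end

section
/- Let H ∈ (0,1), γ ∈ [0,1), and d ∈ (0, H/(1−H)). Define f_d(s) = 1 − γ − (γ − γ²)s^{2H} + γ(1−s)^{2H} − (H/d)(1 + d − dγs)((1−γ)s^{2H−1} + (1−s)^{2H−1}). Then f_d(s) < 0 for every s ∈ (0,1). -/
open Set Real

/-!
Write `a = s^(2H-1)`, `b = (1-s)^(2H-1)` and `K = (H/d)(1 + d - dγs)`, so that `s^(2H) = a s` and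
`(1-s)^(2H) = b (1-s)`. Then `f_d(s) = (1 - γs - K)((1-γ)a + b) - (1-γ)(a + b - 1)`.
Since `2H - 1 < 1`, we have `a + b ≥ s + (1 - s) = 1`, and `d < H/(1-H)` gives `K > 1 - γs`;
so both terms are negative, resp. nonpositive.
-/

lemma one_le_rpow_add_one_sub_rpow {s p : ℝ} (hs : s ∈ Icc (0 : ℝ) 1) (hp : p ≤ 1) :
    1 ≤ s ^ p + (1 - s) ^ p := by
  have h₁ : s ≤ s ^ p := self_le_rpow_of_le_one hs.1 hs.2 hp
  have h₂ : 1 - s ≤ (1 - s) ^ p :=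
    self_le_rpow_of_le_one (sub_nonneg.mpr hs.2) (sub_le_self 1 hs.1) hp
  linarith

lemma rpow_eq_rpow_sub_one_mul {x : ℝ} (hx : x ≠ 0) (y : ℝ) : x ^ y = x ^ (y - 1) * x := by
  rw [← rpow_add_one hx, sub_add_cancel]

lemma one_sub_mul_lt_div_mul {H γ d s : ℝ} (hH : H < 1) (hd₀ : 0 < d) (hd : d < H / (1 - H))
    (hγs : 0 ≤ γ * s) : 1 - γ * s < H / d * (1 + d - d * γ * s) := by
  have hH_div : 1 - H < H / d := by
    rw [lt_div_iff₀ hd₀]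
    rwa [lt_div_iff₀ (by linarith), mul_comm] at hd
  have hK : H / d * (1 + d - d * γ * s) = H / d + H - H * (γ * s) := by
    field_simp
  rw [hK]
  linarith [mul_nonneg (sub_nonneg.mpr hH.le) hγs]

lemma f_d_reduced_neg {γ s a b K : ℝ} (hγ : γ ≤ 1) (ha : 0 ≤ a) (hb : 0 < b)
    (hab : 1 ≤ a + b) (hK : 1 - γ * s < K) :
    1 - γ - (γ - γ ^ 2) * (a * s) + γ * (b * (1 - s)) - K * ((1 - γ) * a + b) < 0 := by
  have hT : 0 < (1 - γ) * a + b := by nlinarith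
  have hrest : 0 ≤ (1 - γ) * (a + b - 1) := mul_nonneg (sub_nonneg.mpr hγ) (by linarith)
  calc 1 - γ - (γ - γ ^ 2) * (a * s) + γ * (b * (1 - s)) - K * ((1 - γ) * a + b)
      = (1 - γ * s - K) * ((1 - γ) * a + b) - (1 - γ) * (a + b - 1) := by ring
    _ < 0 := by linarith [mul_neg_of_neg_of_pos (sub_neg.mpr hK) hT]

/-- The function `f_d` is negative on `(0,1)` whenever `d ∈ (0, H/(1-H))`. -/
theorem f_d_neg (H γ d : ℝ) (hH : H ∈ Ioo (0 : ℝ) 1) (hγ : γ ∈ Ico (0 : ℝ) 1)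
    (hd : d ∈ Ioo (0 : ℝ) (H / (1 - H))) :
    ∀ s ∈ Ioo (0 : ℝ) 1,
      1 - γ - (γ - γ ^ 2) * s ^ (2 * H) + γ * (1 - s) ^ (2 * H) -
        H / d * (1 + d - d * γ * s) *
          ((1 - γ) * s ^ (2 * H - 1) + (1 - s) ^ (2 * H - 1)) < 0 := by
  intro s hs
  have hs' : 0 < 1 - s := sub_pos.mpr hs.2
  rw [rpow_eq_rpow_sub_one_mul hs.1.ne', rpow_eq_rpow_sub_one_mul hs'.ne']
  exact f_d_reduced_neg hγ.2.le (rpow_nonneg hs.1.le _) (rpow_pos_of_pos hs' _)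
    (one_le_rpow_add_one_sub_rpow (Ioo_subset_Icc_self hs) (by linarith [hH.2]))
    (one_sub_mul_lt_div_mul hH.2 hd.1 hd.2 (mul_nonneg hγ.1 hs.1.le))
end

section
/- Let H ∈ (0,1) and d ∈ (0, H/(1−H)]. Then for every t ∈ (0,1), t^{2H}/(1 + dt)² < 1/(1+d)²; equivalently, t^H (1+d) < 1 + dt for all t ∈ (0,1). (This says that the variance σ_d²(0,t) = t^{2H}/(1+dt)² along the boundary line {(0,t) : 0 ≤ t ≤ 1} attains its maximum uniquely at t = 1.) -/
open Set Real

/-- Bernoulli's inequality `t^H < 1 + H (t - 1)` for `0 < H < 1` lets the tangent line at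
`t = 1` take the place of `t^H`; the bound `d ≤ H / (1 - H)` is exactly what makes
`(1 + H (t - 1)) (1 + d) ≤ 1 + d t` for `t < 1`. -/
theorem rpow_mul_one_add_lt_one_add_mul {H d t : ℝ} (hH : H ∈ Ioo (0 : ℝ) 1)
    (hd : d * (1 - H) ≤ H) (hd0 : 0 ≤ d) (ht : t ∈ Ioo (0 : ℝ) 1) :
    t ^ H * (1 + d) < 1 + d * t := by
  have bernoulli : t ^ H < 1 + H * (t - 1) := by
    simpa using rpow_one_add_lt_one_add_mul_self (s := t - 1) (by linarith [ht.1])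
      (by linarith [ht.2]) hH.1 hH.2
  calc t ^ H * (1 + d) < (1 + H * (t - 1)) * (1 + d) := by gcongr
    _ ≤ 1 + d * t := by nlinarith [ht.2]

theorem rpow_two_mul_div_sq_lt_s17 {H a b t : ℝ} (ht : 0 < t) (ha : 0 < a) (hb : 0 < b)
    (h : t ^ H * a < b) :
    t ^ (2 * H) / b ^ 2 < 1 / a ^ 2 := by
  have hlt : t ^ H / b < 1 / a := by
    rw [div_lt_div_iff₀ hb ha]
    linarith
  calc t ^ (2 * H) / b ^ 2 = (t ^ H / b) ^ 2 := by
        rw [div_pow, mul_comm, rpow_mul ht.le, rpow_two]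
    _ < (1 / a) ^ 2 := by gcongr
    _ = 1 / a ^ 2 := by rw [one_div_pow]

/-- The variance `t^{2H}/(1+dt)²` along the boundary line `{(0,t)}` attains its maximum
uniquely at `t = 1`: for `t ∈ (0,1)`, `t^{2H}/(1+dt)² < 1/(1+d)²`;
equivalently `t^H (1+d) < 1 + dt`. -/
theorem boundary_variance_max (H d : ℝ) (hH : H ∈ Ioo (0 : ℝ) 1)
    (hd : d ∈ Ioc (0 : ℝ) (H / (1 - H))) :
    ∀ t ∈ Ioo (0 : ℝ) 1,
      t ^ (2 * H) / (1 + d * t) ^ 2 < 1 / (1 + d) ^ 2 ∧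
      t ^ H * (1 + d) < 1 + d * t := by
  intro t ht
  have hd' : d * (1 - H) ≤ H := (le_div_iff₀ (by linarith [hH.2])).mp hd.2
  have key := rpow_mul_one_add_lt_one_add_mul hH hd' hd.1.le ht
  have hdt : 0 < 1 + d * t := by nlinarith [hd.1, ht.1]
  exact ⟨rpow_two_mul_div_sq_lt_s17 ht.1 (by linarith [hd.1]) hdt key, key⟩
end

section
/- Let H ∈ (0,1), c > 0, x > 0, and let T : (0,∞) → (0,∞) satisfy lim_{u→∞} T_u/u = 0. Define T_x(u) = T_u − x T_u^{2H+1}/u². Then lim_{u→∞} [ ((u + c T_x(u))/T_x(u)^H)² − ((u + c T_u)/T_u^H)² ] = 2Hx. -/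
open Set Filter Real Topology

/-
With `r = T_u / u` and `e = x T_u^{2H} / u²` one has `T_x(u) = T_u (1 - e)`, and the difference
of squares equals exactly
  `x (1 + c r)² ((1 - e)^{-2H} - 1) / e + x (c² r² e - 2 c r (1 + c r)) (1 - e)^{-2H}`.
Since `0 < H < 1`, both `r` and `e = x r^{2H} u^{2H-2}` tend to `0`; the difference quotient tends
to the derivative `2H` of `e ↦ (1 - e)^{-2H}` at `0`, and everything else vanishes in the limit.
-/

theorem tendsto_one_sub_rpow_sub_one_div (a : ℝ) :
    Tendsto (fun e : ℝ => ((1 - e) ^ a - 1) / e) (𝓝[≠] 0) (𝓝 (-a)) := by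
  have hderiv : HasDerivAt (fun e : ℝ => (1 - e) ^ a) (-a) 0 := by
    simpa using ((hasDerivAt_id (0 : ℝ)).const_sub 1).rpow_const (p := a) (by simp)
  refine (hasDerivAt_iff_tendsto_slope_zero.mp hderiv).congr fun e => ?_
  simp [div_eq_inv_mul]

theorem tendsto_rpow_div_sq_atTop {T : ℝ → ℝ} {p : ℝ} (hp0 : 0 < p) (hp2 : p < 2)
    (hT : ∀ᶠ u in atTop, 0 ≤ T u) (hlim : Tendsto (fun u => T u / u) atTop (𝓝 0)) :
    Tendsto (fun u => T u ^ p / u ^ 2) atTop (𝓝 0) := by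
  have hratio : Tendsto (fun u => (T u / u) ^ p) atTop (𝓝 0) := by
    simpa [Function.comp_def, zero_rpow hp0.ne'] using
      (continuousAt_rpow_const 0 p (Or.inr hp0.le)).tendsto.comp hlim
  have hdecay : Tendsto (fun u : ℝ => u ^ (p - 2)) atTop (𝓝 0) := by
    simpa using tendsto_rpow_neg_atTop (by linarith : 0 < 2 - p)
  have hprod : Tendsto (fun u => (T u / u) ^ p * u ^ (p - 2)) atTop (𝓝 0) := by
    simpa using hratio.mul hdecay
  refine hprod.congr' ?_
  filter_upwards [hT, eventually_gt_atTop 0] with u hTu hu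
  rw [div_rpow hTu hu.le, rpow_sub hu, rpow_two]
  field_simp [(rpow_pos_of_pos hu p).ne']

theorem sq_div_rpow_sub_sq_div_rpow_eq {H c x u t e : ℝ} (hu : 0 < u) (ht : 0 < t)
    (he : e = x * (t ^ (2 * H) / u ^ 2)) (he0 : e ≠ 0) (he1 : e < 1) :
    ((u + c * (t - x * t ^ (2 * H + 1) / u ^ 2)) / (t - x * t ^ (2 * H + 1) / u ^ 2) ^ H) ^ 2
        - ((u + c * t) / t ^ H) ^ 2
      = x * (1 + c * (t / u)) ^ 2 * (((1 - e) ^ (-(2 * H)) - 1) / e)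
        + x * (c ^ 2 * (t / u) ^ 2 * e - 2 * c * (1 + c * (t / u)) * (t / u))
          * (1 - e) ^ (-(2 * H)) := by
  have hshrink : t - x * t ^ (2 * H + 1) / u ^ 2 = t * (1 - e) := by
    rw [he, rpow_add ht, rpow_one]; ring
  have hsq (y : ℝ) (hy : 0 < y) : (y ^ H) ^ 2 = y ^ (2 * H) := by
    rw [← rpow_natCast, ← rpow_mul hy.le]; ring_nf
  have h1e : 0 < 1 - e := by linarith
  have hQ := rpow_pos_of_pos h1e (2 * H)
  have hx : x ≠ 0 := left_ne_zero_of_mul (he ▸ he0)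
  rw [hshrink, div_pow, div_pow, mul_rpow ht.le h1e.le, mul_pow, hsq t ht, hsq _ h1e,
    rpow_neg h1e.le]
  generalize (1 - e) ^ (2 * H) = Q at hQ ⊢
  subst he
  field_simp
  ring

theorem short_horizon_squares_limit_general (H c x : ℝ) (hH : H ∈ Ioo (0 : ℝ) 1)
    (hx : 0 < x) (T : ℝ → ℝ) (hT : ∀ u, 0 < u → 0 < T u)
    (hTlim : Tendsto (fun u => T u / u) atTop (nhds 0)) :
    Tendsto (fun u =>
        ((u + c * (T u - x * (T u) ^ (2 * H + 1) / u ^ 2)) /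
            (T u - x * (T u) ^ (2 * H + 1) / u ^ 2) ^ H) ^ 2 -
          ((u + c * T u) / (T u) ^ H) ^ 2)
      atTop (nhds (2 * H * x)) := by
  obtain ⟨hH0, hH1⟩ := hH
  have hTpos : ∀ᶠ u in atTop, 0 < T u := (eventually_gt_atTop 0).mono hT
  set E := fun u => x * (T u ^ (2 * H) / u ^ 2)
  have hE : Tendsto E atTop (𝓝 0) := by
    simpa using (tendsto_rpow_div_sq_atTop (by linarith) (by linarith)
      (hTpos.mono fun _ h => h.le) hTlim).const_mul x
  have hEpos : ∀ᶠ u in atTop, 0 < E u := by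
    filter_upwards [eventually_gt_atTop 0, hTpos] with u hu hTu
    positivity
  have hElt : ∀ᶠ u in atTop, E u < 1 := hE.eventually (eventually_lt_nhds one_pos)
  have hslope : Tendsto (fun u => ((1 - E u) ^ (-(2 * H)) - 1) / E u) atTop (𝓝 (2 * H)) := by
    simpa [Function.comp_def] using (tendsto_one_sub_rpow_sub_one_div (-(2 * H))).comp
      (tendsto_nhdsWithin_of_tendsto_nhds_of_eventually_within _ hE (hEpos.mono fun _ h => h.ne'))
  have hfactor : Tendsto (fun u => (1 - E u) ^ (-(2 * H))) atTop (𝓝 1) := by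
    have hcont : ContinuousAt (fun e : ℝ => (1 - e) ^ (-(2 * H))) 0 :=
      (continuous_const.sub continuous_id).continuousAt.rpow_const (Or.inl (by simp))
    simpa [Function.comp_def] using hcont.tendsto.comp hE
  have hgrowth : Tendsto (fun u => 1 + c * (T u / u)) atTop (𝓝 1) := by
    simpa using (hTlim.const_mul c).const_add 1
  have hlim := ((hgrowth.pow 2).const_mul x |>.mul hslope).add
    ((((hTlim.pow 2).const_mul (c ^ 2) |>.mul hE).sub
      ((hgrowth.const_mul (2 * c)).mul hTlim)).const_mul x |>.mul hfactor)
  rw [show x * 1 ^ 2 * (2 * H) + x * (c ^ 2 * 0 ^ 2 * 0 - 2 * c * 1 * 0) * 1 = 2 * H * x by ring]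
    at hlim
  refine hlim.congr' ?_
  filter_upwards [eventually_gt_atTop 0, hTpos, hEpos, hElt] with u hu hTu hE0 hE1
  exact (sq_div_rpow_sub_sq_div_rpow_eq hu hTu rfl hE0.ne' hE1).symm

/-- The limit identifying the exponential constant `e^{-Hx}` in the short-time-horizon
approximation of the conditional ruin time. -/
theorem short_horizon_squares_limit (H c x : ℝ) (hH : H ∈ Ioo (0 : ℝ) 1) (hc : 0 < c)
    (hx : 0 < x) (T : ℝ → ℝ) (hT : ∀ u, 0 < u → 0 < T u)
    (hTlim : Tendsto (fun u => T u / u) atTop (nhds 0)) :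
    Tendsto (fun u =>
        ((u + c * (T u - x * (T u) ^ (2 * H + 1) / u ^ 2)) /
            (T u - x * (T u) ^ (2 * H + 1) / u ^ 2) ^ H) ^ 2 -
          ((u + c * T u) / (T u) ^ H) ^ 2)
      atTop (nhds (2 * H * x)) :=
  short_horizon_squares_limit_general H c x hH hx T hT hTlim
end

section
/- Let H ∈ (0,1), c > 0, x > 0, and let T : (0,∞) → (0,∞) satisfy lim_{u→∞} T_u/u = s_0 ∈ (0, t_0), where t_0 = H/(c(1−H)). Then lim_{u→∞} [ ((u + c(T_u − x u^{2H−1}))/(T_u − x u^{2H−1})^H)² − ((u + c T_u)/T_u^H)² ] = 2λx, where λ = (1 + c s_0)(H − (1−H) c s_0)/s_0^{2H+1}. -/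
/-!
Put `G t = (1 + c t)² t^(-2H)` (`horizonProfile c H`). For `u, t > 0` one has
`((u + c t) / t^H)² = u^(2-2H) G(t / u)`, so the difference of squares is
`u^(2-2H) (G(a₁) - G(a₂))` with `a₂ = T_u / u` and `a₁ = a₂ - x u^(2H-2)`. Both points
tend to `s₀`, while `u^(2-2H) (a₁ - a₂) = -x`; since `G` is strictly differentiable at `s₀`, the
difference therefore tends to `-x G'(s₀) = 2λx`.
-/

open Set Filter Real Topology Asymptotics

theorem HasStrictDerivAt.tendsto_smul_sub_of_tendsto_mul_sub {𝕜 F α : Type*}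
    [NontriviallyNormedField 𝕜] [NormedAddCommGroup F] [NormedSpace 𝕜 F] {f : 𝕜 → F} {f' : F}
    {a L : 𝕜} {l : Filter α} {a₁ a₂ k : α → 𝕜} (hf : HasStrictDerivAt f f' a)
    (h₁ : Tendsto a₁ l (𝓝 a)) (h₂ : Tendsto a₂ l (𝓝 a))
    (hk : Tendsto (fun i => k i * (a₁ i - a₂ i)) l (𝓝 L)) :
    Tendsto (fun i => k i • (f (a₁ i) - f (a₂ i))) l (𝓝 (L • f')) := by
  have hrem : (fun i => k i • (f (a₁ i) - f (a₂ i) - (a₁ i - a₂ i) • f')) =o[l]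
      fun i => k i * (a₁ i - a₂ i) := by
    have := hf.isLittleO.comp_tendsto (h₁.prodMk_nhds h₂)
    simpa [Function.comp_def] using (isBigO_refl k l).smul_isLittleO this
  have hrem0 := (isLittleO_one_iff 𝕜).mp (hrem.trans_isBigO (hk.isBigO_one 𝕜))
  convert hrem0.add (hk.smul_const f') using 2 with i
  · rw [smul_sub _ (f (a₁ i) - f (a₂ i)), smul_smul]; abel
  · simp

noncomputable def horizonProfile (c H t : ℝ) : ℝ := (1 + c * t) ^ 2 * t ^ (-(2 * H))

theorem sq_add_mul_div_rpow_eq_rpow_mul_horizonProfile (c H : ℝ) {u t : ℝ} (hu : 0 < u)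
    (ht : 0 < t) :
    ((u + c * t) / t ^ H) ^ 2 = u ^ (2 - 2 * H) * horizonProfile c H (t / u) := by
  have hden : (t ^ H) ^ 2 = t ^ (2 * H) := by
    rw [← rpow_natCast, ← rpow_mul ht.le, mul_comm]; norm_num
  have hscale : u ^ (2 - 2 * H) = u ^ 2 / u ^ (2 * H) := by
    rw [rpow_sub hu, rpow_two]
  have hratio : (t / u) ^ (-(2 * H)) = u ^ (2 * H) / t ^ (2 * H) := by
    rw [div_rpow ht.le hu.le, rpow_neg ht.le, rpow_neg hu.le, inv_div_inv]
  have hu₂ : 0 < u ^ (2 * H) := rpow_pos_of_pos hu _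
  have ht₂ : 0 < t ^ (2 * H) := rpow_pos_of_pos ht _
  rw [horizonProfile, div_pow, hden, hscale, hratio]
  field_simp

theorem horizonProfile_hasStrictDerivAt (c H : ℝ) {t : ℝ} (ht : 0 < t) :
    HasStrictDerivAt (horizonProfile c H)
      (-(2 * ((1 + c * t) * (H - (1 - H) * c * t) / t ^ (2 * H + 1)))) t := by
  have hlin : HasStrictDerivAt (fun t => 1 + c * t) c t := by
    simpa using ((hasStrictDerivAt_id t).const_mul c).const_add 1
  have hp : 0 < t ^ (2 * H + 1) := rpow_pos_of_pos ht _
  have e₁ : t ^ (-(2 * H)) = t / t ^ (2 * H + 1) := by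
    rw [rpow_add ht, rpow_one, rpow_neg ht.le]; field_simp
  have e₂ : t ^ (-(2 * H) - 1) = 1 / t ^ (2 * H + 1) := by
    rw [← neg_add', rpow_neg ht.le, one_div]
  refine ((hlin.fun_pow 2).mul
    (hasStrictDerivAt_rpow_const_of_ne ht.ne' (-(2 * H)))).congr_deriv ?_
  rw [e₁, e₂]
  field_simp
  ring

theorem intermediate_horizon_squares_limit_general (H c x s₀ : ℝ) (hH : H ∈ Ioo (0 : ℝ) 1)
    (hs₀ : s₀ ∈ Ioo (0 : ℝ) (H / (c * (1 - H))))
    (T : ℝ → ℝ)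
    (hTlim : Tendsto (fun u => T u / u) atTop (nhds s₀)) :
    Tendsto (fun u =>
        ((u + c * (T u - x * u ^ (2 * H - 1))) / (T u - x * u ^ (2 * H - 1)) ^ H) ^ 2 -
          ((u + c * T u) / (T u) ^ H) ^ 2)
      atTop
      (nhds (2 * ((1 + c * s₀) * (H - (1 - H) * c * s₀) / s₀ ^ (2 * H + 1)) * x)) := by
  have hpow : ∀ᶠ u : ℝ in atTop, u ^ (2 * H - 1) / u = u ^ (-(2 - 2 * H)) := by
    filter_upwards [eventually_gt_atTop 0] with u hu
    rw [← rpow_sub_one hu.ne']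
    ring_nf
  have hshift : Tendsto (fun u => x * u ^ (2 * H - 1) / u) atTop (𝓝 0) := by
    have hdecay := (tendsto_rpow_neg_atTop (by linarith [hH.2] : 0 < 2 - 2 * H)).congr'
      (hpow.mono fun u hu => hu.symm)
    simpa [mul_div_assoc] using hdecay.const_mul x
  have h₁ : Tendsto (fun u => (T u - x * u ^ (2 * H - 1)) / u) atTop (𝓝 s₀) := by
    simpa [sub_div] using hTlim.sub hshift
  have hk : ∀ᶠ u in atTop,
      u ^ (2 - 2 * H) * ((T u - x * u ^ (2 * H - 1)) / u - T u / u) = -x := by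
    filter_upwards [hpow, eventually_gt_atTop 0] with u hu hu₀
    rw [sub_div, sub_sub_cancel_left, mul_div_assoc, hu, rpow_neg hu₀.le]
    field_simp
  have hscale : ∀ᶠ u in atTop,
      ((u + c * (T u - x * u ^ (2 * H - 1))) / (T u - x * u ^ (2 * H - 1)) ^ H) ^ 2 -
          ((u + c * T u) / (T u) ^ H) ^ 2 =
        u ^ (2 - 2 * H) * (horizonProfile c H ((T u - x * u ^ (2 * H - 1)) / u) -
          horizonProfile c H (T u / u)) := by
    filter_upwards [eventually_gt_atTop 0, h₁.eventually (eventually_gt_nhds hs₀.1),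
      hTlim.eventually (eventually_gt_nhds hs₀.1)] with u hu h₁pos hpos
    rw [div_pos_iff_of_pos_right hu] at h₁pos hpos
    rw [sq_add_mul_div_rpow_eq_rpow_mul_horizonProfile c H hu h₁pos,
      sq_add_mul_div_rpow_eq_rpow_mul_horizonProfile c H hu hpos, mul_sub]
  have hlim := (horizonProfile_hasStrictDerivAt c H hs₀.1).tendsto_smul_sub_of_tendsto_mul_sub
    h₁ hTlim (tendsto_const_nhds.congr' (EventuallyEq.symm hk))
  convert hlim.congr' (EventuallyEq.symm hscale) using 2
  simp only [smul_eq_mul]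
  ring

/-- The limit identifying the exponential constant `e^{-λx}` in the
intermediate-time-horizon approximation of the conditional ruin time. -/
theorem intermediate_horizon_squares_limit (H c x s₀ : ℝ) (hH : H ∈ Ioo (0 : ℝ) 1)
    (hc : 0 < c) (hx : 0 < x) (hs₀ : s₀ ∈ Ioo (0 : ℝ) (H / (c * (1 - H))))
    (T : ℝ → ℝ) (hT : ∀ u, 0 < u → 0 < T u)
    (hTlim : Tendsto (fun u => T u / u) atTop (nhds s₀)) :
    Tendsto (fun u =>
        ((u + c * (T u - x * u ^ (2 * H - 1))) / (T u - x * u ^ (2 * H - 1)) ^ H) ^ 2 -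
          ((u + c * T u) / (T u) ^ H) ^ 2)
      atTop
      (nhds (2 * ((1 + c * s₀) * (H - (1 - H) * c * s₀) / s₀ ^ (2 * H + 1)) * x)) :=
  intermediate_horizon_squares_limit_general H c x s₀ hH hs₀ T hTlim
end
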